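/- Let d > 0, r ∈ ℝ, and A, L : [0,∞) → ℝ be C² with L(t) > 0. Suppose v(t,y) solves v_t = (dL₀²/L²)v_yy + ((ȦL₀ + yL̇)/L)v_y + R(t,y)v on (0, L₀). Define w(t,y) = v(t,y)·(L(t)/L₀)^{1/2}·exp(-rt + ∫₀ᵗ Ȧ(s)²/(4d) ds)·exp(y²L̇(t)L(t)/(4dL₀²) + yȦ(t)L(t)/(2dL₀)). Then, for R(t,y) = r - (α(t)L(t)²/(2L₀²))(y - β(t)L₀)², w satisfies the advection-free equation w_t = (dL₀²/L(t)²) w_yy + ( (L̈(t)L(t)/(4dL₀²))y² + (Ä(t)L(t)/(2dL₀))y - (α(t)L(t)²/(2L₀²))(y - β(t)L₀)² ) w. -/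

import Mathlib

open Real

theorem stmt_13 (d r L₀ : ℝ) (hd : 0 < d) (hL₀ : 0 < L₀)
    (A L : ℝ → ℝ) (hA : ContDiff ℝ 2 A) (hLreg : ContDiff ℝ 2 L) (hLpos : ∀ t, 0 < L t)
    (α β : ℝ → ℝ) (v : ℝ → ℝ → ℝ)
    (hv : ContDiff ℝ 2 (fun p : ℝ × ℝ => v p.1 p.2))
    (hpde : ∀ t : ℝ, 0 < t → ∀ y ∈ Set.Ioo (0:ℝ) L₀,
      deriv (fun τ => v τ y) t
        = d * L₀ ^ 2 / (L t) ^ 2 * deriv (deriv (fun η => v t η)) y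
          + (deriv A t * L₀ + y * deriv L t) / L t * deriv (fun η => v t η) y
          + (r - α t * (L t) ^ 2 / (2 * L₀ ^ 2) * (y - β t * L₀) ^ 2) * v t y) :
    let w : ℝ → ℝ → ℝ := fun t y =>
      v t y * Real.sqrt (L t / L₀)
        * Real.exp (-r * t + ∫ s in (0:ℝ)..t, (deriv A s) ^ 2 / (4 * d))
        * Real.exp (y ^ 2 * deriv L t * L t / (4 * d * L₀ ^ 2)
            + y * deriv A t * L t / (2 * d * L₀))
    ∀ t : ℝ, 0 < t → ∀ y ∈ Set.Ioo (0:ℝ) L₀,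
      deriv (fun τ => w τ y) t
        = d * L₀ ^ 2 / (L t) ^ 2 * deriv (deriv (fun η => w t η)) y
          + (deriv (deriv L) t * L t / (4 * d * L₀ ^ 2) * y ^ 2
              + deriv (deriv A) t * L t / (2 * d * L₀) * y
              - α t * (L t) ^ 2 / (2 * L₀ ^ 2) * (y - β t * L₀) ^ 2) * w t y := by
  intro w t ht y hy
  have hd' : d ≠ 0 := ne_of_gt hd
  have hL0' : L₀ ≠ 0 := ne_of_gt hL₀
  have hLt : L t ≠ 0 := ne_of_gt (hLpos t)
  have hA' : ContDiff ℝ ((1 : ℕ) + 1) A := by exact_mod_cast hA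
  have hL' : ContDiff ℝ ((1 : ℕ) + 1) L := by exact_mod_cast hLreg
  have hA1 : ContDiff ℝ 1 (deriv A) := (contDiff_succ_iff_deriv.mp hA').2.2
  have hL1 : ContDiff ℝ 1 (deriv L) := (contDiff_succ_iff_deriv.mp hL').2.2
  have hAdiff : Differentiable ℝ A := (contDiff_succ_iff_deriv.mp hA').1
  have hLdiff : Differentiable ℝ L := (contDiff_succ_iff_deriv.mp hL').1
  have hAd : Differentiable ℝ (deriv A) := hA1.differentiable one_ne_zero
  have hLd : Differentiable ℝ (deriv L) := hL1.differentiable one_ne_zero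
  have hVt2 : ContDiff ℝ 2 (fun τ => v τ y) := hv.comp (contDiff_id.prodMk contDiff_const)
  have hVy2 : ContDiff ℝ ((1 : ℕ) + 1) (fun η => v t η) := by
    exact_mod_cast hv.comp (contDiff_const.prodMk contDiff_id)
  have hVydiff : Differentiable ℝ (fun η => v t η) := (contDiff_succ_iff_deriv.mp hVy2).1
  have hVyd : Differentiable ℝ (deriv (fun η => v t η)) :=
    ((contDiff_succ_iff_deriv.mp hVy2).2.2).differentiable (by simp)
  have hVtdiff : Differentiable ℝ (fun τ => v τ y) := hVt2.differentiable (by norm_num)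
  simp only [w]
  set S := Real.sqrt (L t / L₀) with hSdef
  set E := Real.exp (-r * t + ∫ s in (0:ℝ)..t, (deriv A s) ^ 2 / (4 * d)) with hEdef
  set F := Real.exp (y ^ 2 * deriv L t * L t / (4 * d * L₀ ^ 2)
      + y * deriv A t * L t / (2 * d * L₀)) with hFdef
  -- derivative of the sqrt factor
  have hsp : (0:ℝ) < L t / L₀ := div_pos (hLpos t) hL₀
  have hs2 : Real.sqrt (L t / L₀) ^ 2 = L t / L₀ := Real.sq_sqrt hsp.le
  have hsne : Real.sqrt (L t / L₀) ≠ 0 := by positivity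
  have hS : HasDerivAt (fun τ => Real.sqrt (L τ / L₀)) (deriv L t / (2 * L t) * S) t := by
    rw [hSdef]
    have h := ((hLdiff t).hasDerivAt.div_const L₀).sqrt (ne_of_gt hsp)
    convert h using 1
    have hss' : Real.sqrt (L t / L₀) * Real.sqrt (L t / L₀) * L₀ = L t := by
      rw [Real.mul_self_sqrt hsp.le]; field_simp
    rw [div_mul_eq_mul_div, div_div, div_eq_div_iff (by positivity) (by positivity)]
    linear_combination (2 * deriv L t) * hss'
  -- derivative of the first exponential factor
  have hcont : Continuous fun s => (deriv A s) ^ 2 / (4 * d) := (hA1.continuous.pow 2).div_const _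
  have hE1 : HasDerivAt (fun τ => Real.exp (-r * τ + ∫ s in (0:ℝ)..τ, (deriv A s) ^ 2 / (4 * d)))
      (E * (-r + (deriv A t) ^ 2 / (4 * d))) t := by
    rw [hEdef]
    have h1 : HasDerivAt (fun τ : ℝ => -r * τ) (-r) t := by
      simpa using (hasDerivAt_id t).const_mul (-r)
    exact (h1.add (hcont.integral_hasStrictDerivAt 0 t).hasDerivAt).exp
  -- derivative of the second exponential factor (in time)
  have hE2 : HasDerivAt (fun τ => Real.exp (y ^ 2 * deriv L τ * L τ / (4 * d * L₀ ^ 2)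
        + y * deriv A τ * L τ / (2 * d * L₀)))
      (F * ((y ^ 2 * deriv (deriv L) t * L t + y ^ 2 * deriv L t * deriv L t) / (4 * d * L₀ ^ 2)
        + (y * deriv (deriv A) t * L t + y * deriv A t * deriv L t) / (2 * d * L₀))) t := by
    rw [hFdef]
    have h1 := (((hLd t).hasDerivAt.const_mul (y ^ 2)).mul (hLdiff t).hasDerivAt).div_const
      (4 * d * L₀ ^ 2)
    have h2 := (((hAd t).hasDerivAt.const_mul y).mul (hLdiff t).hasDerivAt).div_const (2 * d * L₀)
    have h3 : HasDerivAt (fun τ => y ^ 2 * deriv L τ * L τ / (4 * d * L₀ ^ 2)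
        + y * deriv A τ * L τ / (2 * d * L₀))
        ((y ^ 2 * deriv (deriv L) t * L t + y ^ 2 * deriv L t * deriv L t) / (4 * d * L₀ ^ 2)
          + (y * deriv (deriv A) t * L t + y * deriv A t * deriv L t) / (2 * d * L₀)) t := by
      exact h1.add h2
    exact h3.exp
  -- time derivative of w
  have htime : HasDerivAt (fun τ => v τ y * Real.sqrt (L τ / L₀)
        * Real.exp (-r * τ + ∫ s in (0:ℝ)..τ, (deriv A s) ^ 2 / (4 * d))
        * Real.exp (y ^ 2 * deriv L τ * L τ / (4 * d * L₀ ^ 2)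
            + y * deriv A τ * L τ / (2 * d * L₀)))
      ((deriv (fun τ => v τ y) t
          + v t y * (deriv L t / (2 * L t) + (-r + (deriv A t) ^ 2 / (4 * d))
            + ((y ^ 2 * deriv (deriv L) t * L t + y ^ 2 * deriv L t * deriv L t) / (4 * d * L₀ ^ 2)
              + (y * deriv (deriv A) t * L t + y * deriv A t * deriv L t) / (2 * d * L₀))))
        * S * E * F) t := by
    have h := (((hVtdiff t).hasDerivAt.mul hS).mul hE1).mul hE2
    refine (h).congr_deriv ?_
    simp only [Pi.mul_apply, ← hSdef, ← hEdef, ← hFdef]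
    ring
  rw [htime.deriv]
  -- spatial derivative of w
  have hg : deriv (fun η => v t η * S * E
        * Real.exp (η ^ 2 * deriv L t * L t / (4 * d * L₀ ^ 2)
            + η * deriv A t * L t / (2 * d * L₀)))
      = fun η => (deriv (fun η => v t η) η
          + v t η * (η * deriv L t * L t / (2 * d * L₀ ^ 2) + deriv A t * L t / (2 * d * L₀)))
        * S * E * Real.exp (η ^ 2 * deriv L t * L t / (4 * d * L₀ ^ 2)
            + η * deriv A t * L t / (2 * d * L₀)) := by
    funext η
    refine HasDerivAt.deriv ?_
    have hexp : HasDerivAt (fun η : ℝ => η ^ 2 * deriv L t * L t / (4 * d * L₀ ^ 2)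
          + η * deriv A t * L t / (2 * d * L₀))
        (η * deriv L t * L t / (2 * d * L₀ ^ 2) + deriv A t * L t / (2 * d * L₀)) η := by
      have h1 := (((hasDerivAt_pow 2 η).mul_const (deriv L t)).mul_const (L t)).div_const
        (4 * d * L₀ ^ 2)
      have h2 := (((hasDerivAt_id η).mul_const (deriv A t)).mul_const (L t)).div_const (2 * d * L₀)
      refine (h1.add h2).congr_deriv ?_
      push_cast
      ring
    have h := (((hVydiff η).hasDerivAt.mul_const S).mul_const E).mul hexp.exp
    refine (h).congr_deriv ?_
    ring
  rw [hg]
  -- second spatial derivative at y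
  have hexp : HasDerivAt (fun η : ℝ => η ^ 2 * deriv L t * L t / (4 * d * L₀ ^ 2)
        + η * deriv A t * L t / (2 * d * L₀))
      (y * deriv L t * L t / (2 * d * L₀ ^ 2) + deriv A t * L t / (2 * d * L₀)) y := by
    have h1 := (((hasDerivAt_pow 2 y).mul_const (deriv L t)).mul_const (L t)).div_const
      (4 * d * L₀ ^ 2)
    have h2 := (((hasDerivAt_id y).mul_const (deriv A t)).mul_const (L t)).div_const (2 * d * L₀)
    refine (h1.add h2).congr_deriv ?_
    push_cast
    ring
  have hm : HasDerivAt (fun η : ℝ => η * deriv L t * L t / (2 * d * L₀ ^ 2)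
        + deriv A t * L t / (2 * d * L₀)) (deriv L t * L t / (2 * d * L₀ ^ 2)) y := by
    have h1 := (((hasDerivAt_id y).mul_const (deriv L t)).mul_const (L t)).div_const
      (2 * d * L₀ ^ 2)
    have h2 := h1.add_const (deriv A t * L t / (2 * d * L₀))
    refine (h2).congr_deriv ?_
    ring
  have h2nd : deriv (fun η => (deriv (fun η => v t η) η
        + v t η * (η * deriv L t * L t / (2 * d * L₀ ^ 2) + deriv A t * L t / (2 * d * L₀)))
      * S * E * Real.exp (η ^ 2 * deriv L t * L t / (4 * d * L₀ ^ 2)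
          + η * deriv A t * L t / (2 * d * L₀))) y
      = (deriv (deriv (fun η => v t η)) y
          + 2 * deriv (fun η => v t η) y
            * (y * deriv L t * L t / (2 * d * L₀ ^ 2) + deriv A t * L t / (2 * d * L₀))
          + v t y * (deriv L t * L t / (2 * d * L₀ ^ 2)
            + (y * deriv L t * L t / (2 * d * L₀ ^ 2) + deriv A t * L t / (2 * d * L₀)) ^ 2))
        * S * E * F := by
    refine HasDerivAt.deriv ?_
    have hP : HasDerivAt (fun η => deriv (fun η => v t η) η
          + v t η * (η * deriv L t * L t / (2 * d * L₀ ^ 2) + deriv A t * L t / (2 * d * L₀)))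
        (deriv (deriv (fun η => v t η)) y
          + (deriv (fun η => v t η) y
              * (y * deriv L t * L t / (2 * d * L₀ ^ 2) + deriv A t * L t / (2 * d * L₀))
            + v t y * (deriv L t * L t / (2 * d * L₀ ^ 2)))) y :=
      (hVyd y).hasDerivAt.add ((hVydiff y).hasDerivAt.mul hm)
    have h := ((hP.mul_const S).mul_const E).mul hexp.exp
    refine (h).congr_deriv ?_
    rw [hFdef]
    ring
  rw [h2nd, hpde t ht y hy]
  field_simp
  ring
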